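/- Let n > 3 be an integer. Let v = (v^X, v^Y, v^Z) : ℝ³ → ℝ³ be the divergence-conforming B-spline velocity field of order 3 with coefficients φ^X, φ^Y, φ^Z. Then for every (x,y,z) ∈ [0,1]³, the divergence (∂v^X/∂x + ∂v^Y/∂y + ∂v^Z/∂z)(x,y,z) exists and equals ∑_{i_X,i_Y,i_Z=−2}^{n−1} B²_{i_X}(x) B²_{i_Y}(y) B²_{i_Z}(z) · ψ(i_X,i_Y,i_Z), where ψ(i) = n·(φ^X(i_X,i_Y,i_Z) − φ^X(i_X−1,i_Y,i_Z)) + n·(φ^Y(i_X,i_Y,i_Z) − φ^Y(i_X,i_Y−1,i_Z)) + n·(φ^Z(i_X,i_Y,i_Z) − φ^Z(i_X,i_Y,i_Z−1)). -/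

import Mathlib

/-- The quadratic uniform B-spline. -/
noncomputable def B2 (t : ℝ) : ℝ :=
  if |t| ≤ 1/2 then 3/4 - t^2
  else if |t| ≤ 3/2 then (1/2) * (3/2 - |t|)^2
  else 0

/-- The cubic uniform B-spline. -/
noncomputable def B3 (t : ℝ) : ℝ :=
  if |t| ≤ 1 then (1/6) * (4 - 3*t^2*(2 - |t|))
  else if |t| ≤ 2 then (1/6) * (2 - |t|)^3
  else 0

/-- Order-2 shifted basis function at knot index `j` on the uniform grid of spacing `1/n`. -/
noncomputable def B2j (n : ℤ) (j : ℤ) (u : ℝ) : ℝ :=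
  B2 ((n : ℝ) * u - (j : ℝ) - 3/2)

/-- Order-3 shifted basis function at knot index `j` on the uniform grid of spacing `1/n`. -/
noncomputable def B3j (n : ℤ) (j : ℤ) (u : ℝ) : ℝ :=
  B3 ((n : ℝ) * u - (j : ℝ) - 2)

/-- First component of the divergence-conforming B-spline velocity field of order 3. -/
noncomputable def vX (n : ℤ) (φ : ℤ → ℤ → ℤ → ℝ) (x y z : ℝ) : ℝ :=
  ∑ iX ∈ Finset.Icc (-3 : ℤ) (n-1), ∑ iY ∈ Finset.Icc (-2 : ℤ) (n-1),
    ∑ iZ ∈ Finset.Icc (-2 : ℤ) (n-1),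
      B3j n iX x * B2j n iY y * B2j n iZ z * φ iX iY iZ

/-- Second component of the divergence-conforming B-spline velocity field of order 3. -/
noncomputable def vY (n : ℤ) (φ : ℤ → ℤ → ℤ → ℝ) (x y z : ℝ) : ℝ :=
  ∑ iX ∈ Finset.Icc (-2 : ℤ) (n-1), ∑ iY ∈ Finset.Icc (-3 : ℤ) (n-1),
    ∑ iZ ∈ Finset.Icc (-2 : ℤ) (n-1),
      B2j n iX x * B3j n iY y * B2j n iZ z * φ iX iY iZ

/-- Third component of the divergence-conforming B-spline velocity field of order 3. -/
noncomputable def vZ (n : ℤ) (φ : ℤ → ℤ → ℤ → ℝ) (x y z : ℝ) : ℝ :=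
  ∑ iX ∈ Finset.Icc (-2 : ℤ) (n-1), ∑ iY ∈ Finset.Icc (-2 : ℤ) (n-1),
    ∑ iZ ∈ Finset.Icc (-3 : ℤ) (n-1),
      B2j n iX x * B2j n iY y * B3j n iZ z * φ iX iY iZ

/-
Differentiating the truncated-power representations of the uniform B-splines gives
`B3' t = B2 (t + 1/2) - B2 (t - 1/2)`, so the derivative of an order-3 spline in one variable is
`n` times a difference of consecutive order-2 basis functions. Summation by parts moves this
difference onto the coefficients; the boundary terms carry the basis functions with indices `-3`
and `n`, which vanish on `[0, 1]`.
-/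

open Finset Topology

def truncPow (k : ℕ) (s : ℝ) : ℝ := max s 0 ^ k

theorem hasDerivAt_truncPow (k : ℕ) (s : ℝ) :
    HasDerivAt (truncPow (k + 2)) ((k + 2) * truncPow (k + 1) s) s := by
  rcases lt_trichotomy s 0 with hs | rfl | hs
  · have h : truncPow (k + 2) =ᶠ[𝓝 s] fun _ => 0 :=
      (eventually_lt_nhds hs).mono fun u hu => by simp [truncPow, max_eq_right hu.le]
    simpa [truncPow, max_eq_right hs.le] using
      (hasDerivAt_const s (0 : ℝ)).congr_of_eventuallyEq h
  · have hl : HasDerivWithinAt (truncPow (k + 2)) 0 (Set.Iic 0) 0 :=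
      (hasDerivWithinAt_const 0 _ 0).congr
        (fun u hu => by simp [truncPow, max_eq_right (Set.mem_Iic.mp hu)]) (by simp [truncPow])
    have hr : HasDerivWithinAt (truncPow (k + 2)) 0 (Set.Ici 0) 0 := by
      simpa using ((hasDerivAt_pow (k + 2) (0 : ℝ)).hasDerivWithinAt (s := Set.Ici 0)).congr
        (fun u hu => by simp [truncPow, max_eq_left (Set.mem_Ici.mp hu)]) (by simp [truncPow])
    have h := hl.union hr
    rw [Set.Iic_union_Ici, hasDerivWithinAt_univ] at h
    simpa [truncPow] using h
  · have h : truncPow (k + 2) =ᶠ[𝓝 s] fun u => u ^ (k + 2) :=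
      (eventually_gt_nhds hs).mono fun u hu => by simp [truncPow, max_eq_left hu.le]
    simpa [truncPow, max_eq_left hs.le] using (hasDerivAt_pow (k + 2) s).congr_of_eventuallyEq h

theorem B2_eq_truncPow (t : ℝ) : B2 t = (truncPow 2 (t + 3/2) - 3 * truncPow 2 (t + 1/2)
    + 3 * truncPow 2 (t - 1/2) - truncPow 2 (t - 3/2)) / 2 := by
  unfold B2 truncPow
  -- Each split is strict on the side matching the `if` conditions, so no surviving region
  -- shrinks to a knot at which two different polynomial pieces would have to agree.
  rcases le_total 0 t with h0 | h0 <;>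
  rcases lt_or_ge t (-3/2) with h1 | h1 <;> rcases lt_or_ge t (-1/2) with h2 | h2 <;>
  rcases le_or_gt t (1/2) with h3 | h3 <;> rcases le_or_gt t (3/2) with h4 | h4 <;>
  (try (exfalso; linarith)) <;>
  simp (disch := grind) only [abs_of_nonneg, abs_of_nonpos, max_eq_left, max_eq_right, if_pos,
    if_neg] <;>
  ring

theorem B3_eq_truncPow (t : ℝ) : B3 t = (truncPow 3 (t + 2) - 4 * truncPow 3 (t + 1)
    + 6 * truncPow 3 t - 4 * truncPow 3 (t - 1) + truncPow 3 (t - 2)) / 6 := by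
  unfold B3 truncPow
  rcases lt_or_ge t (-2) with h1 | h1 <;> rcases lt_or_ge t (-1) with h2 | h2 <;>
  rcases le_or_gt t 0 with h0 | h0 <;>
  rcases le_or_gt t 1 with h3 | h3 <;> rcases le_or_gt t 2 with h4 | h4 <;>
  (try (exfalso; linarith)) <;>
  simp (disch := grind) only [abs_of_nonneg, abs_of_nonpos, max_eq_left, max_eq_right, if_pos,
    if_neg] <;>
  ring

theorem hasDerivAt_B3 (t : ℝ) : HasDerivAt B3 (B2 (t + 1/2) - B2 (t - 1/2)) t := by
  have d (s : ℝ) : HasDerivAt (truncPow 3) (3 * truncPow 2 s) s := by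
    convert hasDerivAt_truncPow 1 s using 1
    norm_num
  have d_add (c : ℝ) := (d (t + c)).comp_add_const t c
  have d_sub (c : ℝ) := (d (t - c)).comp_sub_const t c
  rw [funext B3_eq_truncPow]
  refine (((((d_add 2).sub ((d_add 1).const_mul 4)).add ((d t).const_mul 6)).sub
    ((d_sub 1).const_mul 4)).add (d_sub 2)).div_const 6 |>.congr_deriv ?_
  rw [B2_eq_truncPow, B2_eq_truncPow]
  ring_nf

theorem B2_eq_zero_of_le_abs {t : ℝ} (h : 3/2 ≤ |t|) : B2 t = 0 := by
  rw [B2, if_neg (by linarith), ite_eq_right_iff]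
  intro h'
  rw [le_antisymm h' h]
  ring

theorem B2j_neg_three_eq_zero {n : ℤ} (hn : 0 ≤ n) {u : ℝ} (hu : 0 ≤ u) : B2j n (-3) u = 0 := by
  have : (0 : ℝ) ≤ n * u := mul_nonneg (by exact_mod_cast hn) hu
  apply B2_eq_zero_of_le_abs
  rw [abs_of_nonneg (by push_cast; linarith)]
  push_cast
  linarith

theorem B2j_self_eq_zero {n : ℤ} (hn : 0 ≤ n) {u : ℝ} (hu : u ≤ 1) : B2j n n u = 0 := by
  have : (n : ℝ) * u ≤ n := mul_le_of_le_one_right (by exact_mod_cast hn) hu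
  apply B2_eq_zero_of_le_abs
  rw [abs_of_nonpos (by linarith)]
  linarith

theorem hasDerivAt_B3j (n j : ℤ) (u : ℝ) :
    HasDerivAt (B3j n j) (n * (B2j n j u - B2j n (j + 1) u)) u := by
  have inner : HasDerivAt (fun v : ℝ => n * v - j - 2) n u := by
    simpa using (((hasDerivAt_id u).const_mul (n : ℝ)).sub_const (j : ℝ)).sub_const 2
  refine ((hasDerivAt_B3 _).comp u inner).congr_deriv ?_
  simp only [B2j]
  push_cast
  ring_nf

theorem sum_Icc_sub_mul_eq_sum_mul_sub {R : Type*} [CommRing R] (f g : ℤ → R) {a b : ℤ}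
    (hab : a ≤ b) (ha : f a = 0) (hb : f (b + 1) = 0) :
    ∑ i ∈ Icc a b, (f i - f (i + 1)) * g i = ∑ i ∈ Icc (a + 1) b, f i * (g i - g (i - 1)) := by
  have shift : ∑ i ∈ Icc a b, f (i + 1) * g i = ∑ i ∈ Icc (a + 1) (b + 1), f i * g (i - 1) := by
    rw [← map_add_right_Icc, sum_map]
    simp
  rw [sum_congr rfl fun i _ => sub_mul (f i) (f (i + 1)) (g i), sum_sub_distrib, shift,
    ← Finset.insert_Icc_add_one_left_eq_Icc hab,
    ← Finset.insert_Icc_right_eq_Icc_add_one (by omega),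
    sum_insert (by simp), sum_insert (by simp), ha, hb]
  simp [mul_sub, sum_sub_distrib]

theorem hasDerivAt_sum_B3j_mul {n : ℤ} (hn : 0 ≤ n) (c : ℤ → ℝ) {u : ℝ} (hu : u ∈ Set.Icc 0 1) :
    HasDerivAt (fun v => ∑ i ∈ Icc (-3) (n - 1), B3j n i v * c i)
      (∑ i ∈ Icc (-2) (n - 1), B2j n i u * (n * (c i - c (i - 1)))) u := by
  have h := HasDerivAt.fun_sum fun i (_ : i ∈ Icc (-3) (n - 1)) =>
    (hasDerivAt_B3j n i u).mul_const (c i)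
  refine h.congr_deriv ?_
  have by_parts := sum_Icc_sub_mul_eq_sum_mul_sub (fun i => B2j n i u) (fun i => n * c i)
    (a := -3) (b := n - 1) (by omega) (B2j_neg_three_eq_zero hn hu.1)
    (by simpa using B2j_self_eq_zero hn hu.2)
  calc ∑ i ∈ Icc (-3) (n - 1), n * (B2j n i u - B2j n (i + 1) u) * c i
      = ∑ i ∈ Icc (-3) (n - 1), (B2j n i u - B2j n (i + 1) u) * (n * c i) :=
        sum_congr rfl fun _ _ => by ring
    _ = ∑ i ∈ Icc (-2) (n - 1), B2j n i u * (n * c i - n * c (i - 1)) := by_parts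
    _ = _ := sum_congr rfl fun _ _ => by ring

theorem hasDerivAt_vX {n : ℤ} (hn : 0 ≤ n) (φ : ℤ → ℤ → ℤ → ℝ) {x : ℝ} (hx : x ∈ Set.Icc 0 1)
    (y z : ℝ) :
    HasDerivAt (fun x' => vX n φ x' y z)
      (∑ iX ∈ Icc (-2) (n - 1), ∑ iY ∈ Icc (-2) (n - 1), ∑ iZ ∈ Icc (-2) (n - 1),
        B2j n iX x * B2j n iY y * B2j n iZ z * (n * (φ iX iY iZ - φ (iX - 1) iY iZ))) x := by
  have h := hasDerivAt_sum_B3j_mul hn (fun iX => ∑ iY ∈ Icc (-2) (n - 1),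
    ∑ iZ ∈ Icc (-2) (n - 1), B2j n iY y * B2j n iZ z * φ iX iY iZ) hx
  refine (h.congr_deriv ?_).congr_of_eventuallyEq (.of_forall fun x' => ?_)
  all_goals
    simp only [vX, mul_sum, ← sum_sub_distrib]
    exact sum_congr rfl fun _ _ => sum_congr rfl fun _ _ => sum_congr rfl fun _ _ => by ring

theorem hasDerivAt_vY {n : ℤ} (hn : 0 ≤ n) (φ : ℤ → ℤ → ℤ → ℝ) (x : ℝ) {y : ℝ}
    (hy : y ∈ Set.Icc 0 1) (z : ℝ) :
    HasDerivAt (fun y' => vY n φ x y' z)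
      (∑ iX ∈ Icc (-2) (n - 1), ∑ iY ∈ Icc (-2) (n - 1), ∑ iZ ∈ Icc (-2) (n - 1),
        B2j n iX x * B2j n iY y * B2j n iZ z * (n * (φ iX iY iZ - φ iX (iY - 1) iZ))) y := by
  have h := HasDerivAt.fun_sum fun iX (_ : iX ∈ Icc (-2) (n - 1)) =>
    hasDerivAt_sum_B3j_mul hn (fun iY => ∑ iZ ∈ Icc (-2) (n - 1),
      B2j n iX x * B2j n iZ z * φ iX iY iZ) hy
  refine (h.congr_deriv ?_).congr_of_eventuallyEq (.of_forall fun y' => ?_)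
  all_goals
    simp only [vY, mul_sum, ← sum_sub_distrib]
    exact sum_congr rfl fun _ _ => sum_congr rfl fun _ _ => sum_congr rfl fun _ _ => by ring

theorem hasDerivAt_vZ {n : ℤ} (hn : 0 ≤ n) (φ : ℤ → ℤ → ℤ → ℝ) (x y : ℝ) {z : ℝ}
    (hz : z ∈ Set.Icc 0 1) :
    HasDerivAt (fun z' => vZ n φ x y z')
      (∑ iX ∈ Icc (-2) (n - 1), ∑ iY ∈ Icc (-2) (n - 1), ∑ iZ ∈ Icc (-2) (n - 1),
        B2j n iX x * B2j n iY y * B2j n iZ z * (n * (φ iX iY iZ - φ iX iY (iZ - 1)))) z := by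
  have h := HasDerivAt.fun_sum fun iX (_ : iX ∈ Icc (-2) (n - 1)) =>
    HasDerivAt.fun_sum fun iY (_ : iY ∈ Icc (-2) (n - 1)) =>
      hasDerivAt_sum_B3j_mul hn (fun iZ => B2j n iX x * B2j n iY y * φ iX iY iZ) hz
  refine (h.congr_deriv ?_).congr_of_eventuallyEq (.of_forall fun z' => ?_)
  all_goals
    exact sum_congr rfl fun _ _ => sum_congr rfl fun _ _ => sum_congr rfl fun _ _ => by ring

theorem divergence_divConforming_general (n : ℤ) (hn : 3 < n) (φX φY φZ : ℤ → ℤ → ℤ → ℝ)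
    (x y z : ℝ) (hx : x ∈ Set.Icc (0:ℝ) 1) (hy : y ∈ Set.Icc (0:ℝ) 1)
    (hz : z ∈ Set.Icc (0:ℝ) 1) :
    ∃ dX dY dZ : ℝ,
      HasDerivAt (fun x' : ℝ => vX n φX x' y z) dX x ∧
      HasDerivAt (fun y' : ℝ => vY n φY x y' z) dY y ∧
      HasDerivAt (fun z' : ℝ => vZ n φZ x y z') dZ z ∧
      dX + dY + dZ =
        ∑ iX ∈ Finset.Icc (-2 : ℤ) (n-1), ∑ iY ∈ Finset.Icc (-2 : ℤ) (n-1),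
          ∑ iZ ∈ Finset.Icc (-2 : ℤ) (n-1),
            B2j n iX x * B2j n iY y * B2j n iZ z *
              ((n : ℝ) * (φX iX iY iZ - φX (iX - 1) iY iZ) +
               (n : ℝ) * (φY iX iY iZ - φY iX (iY - 1) iZ) +
               (n : ℝ) * (φZ iX iY iZ - φZ iX iY (iZ - 1))) := by
  have hn' : 0 ≤ n := by omega
  refine ⟨_, _, _, hasDerivAt_vX hn' φX hx y z, hasDerivAt_vY hn' φY x hy z,
    hasDerivAt_vZ hn' φZ x y hz, ?_⟩
  simp only [← sum_add_distrib, ← mul_add]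

/-- The divergence of a divergence-conforming B-spline velocity field of order 3 exists at
every point of `[0,1]³` and is the order-2 B-spline with coefficients `ψ` given by the
scaled finite differences of the coefficients `φX, φY, φZ`. -/
theorem divergence_divConforming (n : ℤ) (hn : 3 < n) (φX φY φZ : ℤ → ℤ → ℤ → ℝ)
    (hφX : ∀ iX iY iZ : ℤ,
      ¬(iX ∈ Finset.Icc (-3 : ℤ) (n-1) ∧ iY ∈ Finset.Icc (-2 : ℤ) (n-1) ∧
        iZ ∈ Finset.Icc (-2 : ℤ) (n-1)) → φX iX iY iZ = 0)
    (hφY : ∀ iX iY iZ : ℤ,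
      ¬(iX ∈ Finset.Icc (-2 : ℤ) (n-1) ∧ iY ∈ Finset.Icc (-3 : ℤ) (n-1) ∧
        iZ ∈ Finset.Icc (-2 : ℤ) (n-1)) → φY iX iY iZ = 0)
    (hφZ : ∀ iX iY iZ : ℤ,
      ¬(iX ∈ Finset.Icc (-2 : ℤ) (n-1) ∧ iY ∈ Finset.Icc (-2 : ℤ) (n-1) ∧
        iZ ∈ Finset.Icc (-3 : ℤ) (n-1)) → φZ iX iY iZ = 0)
    (x y z : ℝ) (hx : x ∈ Set.Icc (0:ℝ) 1) (hy : y ∈ Set.Icc (0:ℝ) 1)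
    (hz : z ∈ Set.Icc (0:ℝ) 1) :
    ∃ dX dY dZ : ℝ,
      HasDerivAt (fun x' : ℝ => vX n φX x' y z) dX x ∧
      HasDerivAt (fun y' : ℝ => vY n φY x y' z) dY y ∧
      HasDerivAt (fun z' : ℝ => vZ n φZ x y z') dZ z ∧
      dX + dY + dZ =
        ∑ iX ∈ Finset.Icc (-2 : ℤ) (n-1), ∑ iY ∈ Finset.Icc (-2 : ℤ) (n-1),
          ∑ iZ ∈ Finset.Icc (-2 : ℤ) (n-1),
            B2j n iX x * B2j n iY y * B2j n iZ z *
              ((n : ℝ) * (φX iX iY iZ - φX (iX - 1) iY iZ) +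
               (n : ℝ) * (φY iX iY iZ - φY iX (iY - 1) iZ) +
               (n : ℝ) * (φZ iX iY iZ - φZ iX iY (iZ - 1))) :=
  divergence_divConforming_general n hn φX φY φZ x y z hx hy hz
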